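/- Let γ > 1, ψ(s) = s^{1-γ}, and let τ, τ̄, φ' be real numbers with τ, τ̄ > 0. Suppose |φ'/τ| ≤ M and |φ'/τ̄| ≤ M for some M > 0. Then |φ'·(ψ'(τ) - ψ'(τ̄) - ψ''(τ̄)(τ - τ̄))| ≤ C₁·(ψ(τ) - ψ(τ̄) - ψ'(τ̄)(τ - τ̄)) where C₁ = (γ+1)·2M (more precisely, C₁ depends only on γ and M). The key inequality used is |φ'/(λτ + (1-λ)τ̄)| ≤ max{|φ'/τ|, |φ'/τ̄|} ≤ 2M for λ ∈ [0,1]. -/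

import Mathlib

open Real Set

/-! Write `R_h = h τ - h τ̄ - h' τ̄ (τ - τ̄)`. The second derivatives of `ψ` and `g = φ' ψ'` are
comparable: `|φ' ψ'''(t)| = (γ + 1) (|φ'| / t) ψ''(t) ≤ (γ + 1) M ψ''(t)` for `t ≥ min τ τ̄`.
Hence `K ψ ± g` with `K = (γ + 1) M` are convex on `[min τ τ̄, ∞)`, and since they lie above
their tangent lines at `τ̄`, `|R_g| ≤ K R_ψ`. -/

theorem ConvexOn.add_mul_sub_le_of_hasDerivAt {S : Set ℝ} {f : ℝ → ℝ} {f' a x : ℝ}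
    (hf : ConvexOn ℝ S f) (ha : a ∈ S) (hx : x ∈ S) (hd : HasDerivAt f f' a) :
    f a + f' * (x - a) ≤ f x := by
  rcases lt_trichotomy a x with hax | rfl | hxa
  · have h := hf.le_slope_of_hasDerivAt ha hx hax hd
    rw [slope_def_field, le_div_iff₀ (sub_pos.2 hax)] at h
    linarith
  · simp
  · have h := hf.slope_le_of_hasDerivAt hx ha hxa hd
    rw [slope_def_field, div_le_iff₀ (sub_pos.2 hxa)] at h
    linarith

theorem sub_sub_mul_nonneg_of_hasDerivAt2 {S : Set ℝ} (hS : Convex ℝ S) {h h' h'' : ℝ → ℝ}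
    (hd : ∀ t ∈ S, HasDerivAt h (h' t) t) (hd2 : ∀ t ∈ S, HasDerivAt h' (h'' t) t)
    (hnonneg : ∀ t ∈ S, 0 ≤ h'' t) {a x : ℝ} (ha : a ∈ S) (hx : x ∈ S) :
    0 ≤ h x - h a - h' a * (x - a) := by
  have hconv : ConvexOn ℝ S h := convexOn_of_hasDerivWithinAt2_nonneg hS
    (fun t ht => (hd t ht).continuousAt.continuousWithinAt)
    (fun t ht => (hd t (interior_subset ht)).hasDerivWithinAt)
    (fun t ht => (hd2 t (interior_subset ht)).hasDerivWithinAt)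
    (fun t ht => hnonneg t (interior_subset ht))
  linarith [hconv.add_mul_sub_le_of_hasDerivAt ha hx (hd a ha)]

theorem abs_sub_sub_mul_le_of_abs_deriv2_le {S : Set ℝ} (hS : Convex ℝ S)
    {f f' f'' g g' g'' : ℝ → ℝ} {K : ℝ}
    (hf : ∀ t ∈ S, HasDerivAt f (f' t) t) (hf' : ∀ t ∈ S, HasDerivAt f' (f'' t) t)
    (hg : ∀ t ∈ S, HasDerivAt g (g' t) t) (hg' : ∀ t ∈ S, HasDerivAt g' (g'' t) t)
    (hK : ∀ t ∈ S, |g'' t| ≤ K * f'' t) {a x : ℝ} (ha : a ∈ S) (hx : x ∈ S) :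
    |g x - g a - g' a * (x - a)| ≤ K * (f x - f a - f' a * (x - a)) := by
  have hadd := sub_sub_mul_nonneg_of_hasDerivAt2 hS (h := fun t => K * f t + g t)
    (h' := fun t => K * f' t + g' t) (h'' := fun t => K * f'' t + g'' t)
    (fun t ht => ((hf t ht).const_mul K).add (hg t ht))
    (fun t ht => ((hf' t ht).const_mul K).add (hg' t ht))
    (fun t ht => by linarith [neg_abs_le (g'' t), hK t ht]) ha hx
  have hsub := sub_sub_mul_nonneg_of_hasDerivAt2 hS (h := fun t => K * f t - g t)
    (h' := fun t => K * f' t - g' t) (h'' := fun t => K * f'' t - g'' t)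
    (fun t ht => ((hf t ht).const_mul K).sub (hg t ht))
    (fun t ht => ((hf' t ht).const_mul K).sub (hg' t ht))
    (fun t ht => by linarith [le_abs_self (g'' t), hK t ht]) ha hx
  exact abs_le.2 ⟨by linarith, by linarith⟩

theorem hasDerivAt_rpow_of_sub_one_eq {p q t : ℝ} (ht : 0 < t) (hpq : p - 1 = q) :
    HasDerivAt (fun s => s ^ p) (p * t ^ q) t :=
  hpq ▸ hasDerivAt_rpow_const (Or.inl ht.ne')

theorem abs_le_mul_of_abs_div_le {a b t M : ℝ} (hb : 0 < b) (hbt : b ≤ t) (h : |a / b| ≤ M) :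
    |a| ≤ M * t :=
  calc |a| = |a / b| * b := by rw [abs_div, abs_of_pos hb, div_mul_cancel₀ _ hb.ne']
    _ ≤ |a / b| * t := by gcongr
    _ ≤ M * t := by gcongr; linarith

theorem abs_mul_rpow_neg_sub_two_le {γ c M s : ℝ} (hγ : 1 < γ) (hs : 0 < s) (hc : |c| ≤ M * s) :
    |c * -((γ + 1) * γ * (γ - 1) * s ^ (-γ - 2))| ≤ (γ + 1) * M * (γ * (γ - 1) * s ^ (-γ - 1)) := by
  have hpow : s ^ (-γ - 1) = s ^ (-γ - 2) * s := by
    rw [← rpow_add_one hs.ne']; ring_nf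
  have hk : 0 ≤ (γ + 1) * γ * (γ - 1) * s ^ (-γ - 2) :=
    mul_nonneg (mul_nonneg (mul_nonneg (by linarith) (by linarith)) (by linarith))
      (rpow_pos_of_pos hs _).le
  calc |c * -((γ + 1) * γ * (γ - 1) * s ^ (-γ - 2))|
      = |c| * ((γ + 1) * γ * (γ - 1) * s ^ (-γ - 2)) := by rw [abs_mul, abs_neg, abs_of_nonneg hk]
    _ ≤ M * s * ((γ + 1) * γ * (γ - 1) * s ^ (-γ - 2)) := by gcongr
    _ = (γ + 1) * M * (γ * (γ - 1) * s ^ (-γ - 1)) := by rw [hpow]; ring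

theorem stmt_7_general (γ τ τb φ' M : ℝ) (hγ : 1 < γ) (hτ : 0 < τ) (hτb : 0 < τb)
    (h1 : |φ' / τ| ≤ M) (h2 : |φ' / τb| ≤ M) :
    |φ' * ((1 - γ) * τ ^ (-γ) - (1 - γ) * τb ^ (-γ)
        - (γ * (γ - 1) * τb ^ (-γ - 1)) * (τ - τb))|
      ≤ (γ + 1) * (2 * M) *
        (τ ^ (1 - γ) - τb ^ (1 - γ) - ((1 - γ) * τb ^ (-γ)) * (τ - τb)) := by
  set S := Ici (min τ τb)
  have hpos : ∀ t ∈ S, 0 < t := fun t ht => (lt_min hτ hτb).trans_le ht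
  have hφ : ∀ t ∈ S, |φ'| ≤ M * t := fun t ht => (min_le_iff.1 ht).elim
    (abs_le_mul_of_abs_div_le hτ · h1) (abs_le_mul_of_abs_div_le hτb · h2)
  have hψ : ∀ t ∈ S, HasDerivAt (fun s => s ^ (1 - γ)) ((1 - γ) * t ^ (-γ)) t :=
    fun t ht => hasDerivAt_rpow_of_sub_one_eq (hpos t ht) (by ring)
  have hψ' : ∀ t ∈ S, HasDerivAt (fun s => (1 - γ) * s ^ (-γ)) (γ * (γ - 1) * t ^ (-γ - 1)) t :=
    fun t ht => ((hasDerivAt_rpow_of_sub_one_eq (hpos t ht) rfl).const_mul _).congr_deriv (by ring)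
  have hψ'' : ∀ t ∈ S, HasDerivAt (fun s => γ * (γ - 1) * s ^ (-γ - 1))
      (-((γ + 1) * γ * (γ - 1) * t ^ (-γ - 2))) t := fun t ht =>
    ((hasDerivAt_rpow_of_sub_one_eq (hpos t ht) (q := -γ - 2) (by ring)).const_mul _).congr_deriv
      (by ring)
  have hcmp := abs_sub_sub_mul_le_of_abs_deriv2_le (convex_Ici _) hψ hψ'
    (fun t ht => (hψ' t ht).const_mul φ') (fun t ht => (hψ'' t ht).const_mul φ')
    (fun t ht => abs_mul_rpow_neg_sub_two_le hγ (hpos t ht) (hφ t ht))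
    (min_le_right τ τb) (min_le_left τ τb)
  calc _ = |φ' * ((1 - γ) * τ ^ (-γ)) - φ' * ((1 - γ) * τb ^ (-γ))
          - φ' * (γ * (γ - 1) * τb ^ (-γ - 1)) * (τ - τb)| := by congr 1; ring
    _ ≤ (γ + 1) * M * (τ ^ (1 - γ) - τb ^ (1 - γ) - (1 - γ) * τb ^ (-γ) * (τ - τb)) := hcmp
    _ ≤ _ := by linarith [(abs_nonneg _).trans hcmp]

/-- The first-derivative Taylor remainder of `ψ(s) = s^{1-γ}` multiplied by `φ'` is bounded by
`(γ+1)·2M` times the zeroth-order Taylor remainder, when `|φ'/τ|, |φ'/τ̄| ≤ M`. -/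
theorem stmt_7 (γ τ τb φ' M : ℝ) (hγ : 1 < γ) (hτ : 0 < τ) (hτb : 0 < τb)
    (hM : 0 < M) (h1 : |φ' / τ| ≤ M) (h2 : |φ' / τb| ≤ M) :
    |φ' * ((1 - γ) * τ ^ (-γ) - (1 - γ) * τb ^ (-γ)
        - (γ * (γ - 1) * τb ^ (-γ - 1)) * (τ - τb))|
      ≤ (γ + 1) * (2 * M) *
        (τ ^ (1 - γ) - τb ^ (1 - γ) - ((1 - γ) * τb ^ (-γ)) * (τ - τb)) :=
  stmt_7_general γ τ τb φ' M hγ hτ hτb h1 h2
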